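/- arXiv:1602.08876 — 3 statements merged into one kernel-verified Lean document; each statement's English description precedes it below -/
import Mathlib

section
/- There exists a 2-factorization of the cocktail party graph K_24 − I (the complete graph on 24 vertices minus a perfect matching) having exactly 7 triangle-factors and 4 quadrangle-factors, which moreover is Q_24-regular: identifying the vertex set with the dicyclic group Q_24 of order 24 (so that K_24 − I = Cay[Q_24 : Q_24∖{1, a^6}], where a^6 is the unique involution of Q_24), left multiplication by every element of Q_24 is an automorphism of the graph permuting the 2-factors of the factorization. In other words, HWP(24; 3, 4; 7, 4) has a sharply-vertex-transitive solution. -/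
/-!
Write `x = xa 0`, so that `xa j = x aʲ`, and let `K = {1, a⁶, x, x a⁶}` (`stabilizer`), the
cyclic subgroup generated by `x`. Five factors are fixed by every left translation: the
triangle-factor of right multiplication by `a⁴` (of order 3) and the quadrangle-factors of right
multiplication by `x aʲ`, `j = 0, …, 3` (of order 4). The remaining six triangle-factors are the
left translates `g B`, `g K ∈ Q₂₄ ⧸ K`, of a `K`-invariant triangle-factor `B`: the union of the
`K`-translates of the triangles `(1, a², a⁵)` and `(a³, a⁴, x a)`. Left translations permute the
factors, and a finite check shows that the eleven factors partition the edges of `K₂₄ - I`.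

Each factor is encoded as the graph `v ~ f v` of a map `f` all of whose orbits have the same
length.
-/

/-- `H` is a 2-factor of the simple graph `G`: a spanning 2-regular subgraph of `G`
(every vertex has exactly two neighbours in `H`). -/
def IsTwoFactor {V : Type*} (G H : SimpleGraph V) : Prop :=
  H ≤ G ∧ ∀ v : V, (H.neighborSet v).ncard = 2

/-- `H` is a 2-factor of `G` all of whose connected components are cycles of length `n`:
since `H` is 2-regular, this is equivalent to requiring that every connected component
of `H` has exactly `n` vertices. For `n = 3` this is a triangle-factor, for `n = 4` a
quadrangle-factor. -/
def IsCycleFactor {V : Type*} (G H : SimpleGraph V) (n : ℕ) : Prop :=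
  IsTwoFactor G H ∧ ∀ v : V, (H.connectedComponentMk v).supp.ncard = n

/-- `F` is a solution of the Hamilton--Waterloo problem HWP on the graph `G` with `r`
triangle-factors and `s` quadrangle-factors: the `r + s` factors `F i` are 2-factors of `G`
whose edge sets partition the edge set of `G` (every edge of `G` lies in exactly one factor),
the first `r` of them being triangle-factors and the remaining `s` quadrangle-factors. -/
def IsHWPSolution {V : Type*} (G : SimpleGraph V) (r s : ℕ)
    (F : Fin (r + s) → SimpleGraph V) : Prop :=
  (∀ i : Fin (r + s), (i : ℕ) < r → IsCycleFactor G (F i) 3) ∧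
  (∀ i : Fin (r + s), r ≤ (i : ℕ) → IsCycleFactor G (F i) 4) ∧
  (∀ e : Sym2 V, e ∈ G.edgeSet → ∃! i : Fin (r + s), e ∈ (F i).edgeSet)

/-- The Cayley graph `Cay[G : G ∖ {1, ι}]` of a group `G` with connection set the complement
of `{1, ι}`: two vertices `x, y` are adjacent iff `x ≠ y` and `x⁻¹ * y ∉ {ι, ι⁻¹}`.
When `ι` is an involution this is the complete graph on `G` minus the perfect matching
`{{x, x * ι} | x ∈ G}`, i.e. the cocktail party graph `K_|G| - I`. -/
def cocktailCayley (G : Type*) [Group G] (ι : G) : SimpleGraph G where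
  Adj x y := x ≠ y ∧ x⁻¹ * y ≠ ι ∧ y⁻¹ * x ≠ ι
  symm := ⟨fun _ _ h => ⟨h.1.symm, h.2.2, h.2.1⟩⟩
  loopless := ⟨fun _ h => h.1 rfl⟩

open Function SimpleGraph

section CycleFactor

variable {V : Type*} {f : V → V} {n : ℕ}

theorem Function.Semiconj.minimalPeriod_apply {W : Type*} {e : V → W} {g : W → W}
    (he : Injective e) (h : Semiconj e f g) (x : V) :
    minimalPeriod g (e x) = minimalPeriod f x :=
  minimalPeriod_eq_minimalPeriod_iff.mpr fun k => by
    simp only [IsPeriodicPt, IsFixedPt, ← (h.iterate_right k).eq, he.eq_iff]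

theorem minimalPeriod_mul_right {M : Type*} [LeftCancelMonoid M] (s x : M) :
    minimalPeriod (· * s) x = orderOf s :=
  minimalPeriod_eq_minimalPeriod_iff.mpr fun k => by
    rw [isPeriodicPt_mul_iff_pow_eq_one, IsPeriodicPt, IsFixedPt, mul_right_iterate_apply,
      mul_eq_left]

theorem SimpleGraph.map_fromRel_of_semiconj {W : Type*} (e : V ≃ W) {g : W → W}
    (h : Semiconj e f g) : (fromRel (f · = ·)).map e.toEmbedding = fromRel (g · = ·) := by
  ext x y
  obtain ⟨u, rfl⟩ := e.surjective x
  obtain ⟨v, rfl⟩ := e.surjective y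
  refine (map_adj_apply (f := e.toEmbedding)).trans ?_
  simp only [fromRel_adj, ← h.eq, e.injective.eq_iff, e.injective.ne_iff]

variable (hf : ∀ v, minimalPeriod f v = n)
include hf

theorem iterate_ne_self_of_minimalPeriod_eq {k : ℕ} (hk : 0 < k) (hkn : k < n) (v : V) :
    f^[k] v ≠ v :=
  not_isPeriodicPt_of_pos_of_lt_minimalPeriod hk.ne' (hf v ▸ hkn)

theorem iterate_pred_apply_of_minimalPeriod_eq (hn : 0 < n) (v : V) : f^[n - 1] (f v) = v := by
  rw [← iterate_succ_apply, Nat.succ_eq_add_one, Nat.sub_add_cancel hn]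
  exact hf v ▸ isPeriodicPt_minimalPeriod f v

theorem apply_iterate_pred_of_minimalPeriod_eq (hn : 0 < n) (v : V) : f (f^[n - 1] v) = v := by
  rw [← iterate_succ_apply' f, Nat.succ_eq_add_one, Nat.sub_add_cancel hn]
  exact hf v ▸ isPeriodicPt_minimalPeriod f v

theorem neighborSet_fromRel_eq_pair (hn : 3 ≤ n) (v : V) :
    (fromRel (f · = ·)).neighborSet v = {f v, f^[n - 1] v} := by
  ext y
  simp only [mem_neighborSet, fromRel_adj, Set.mem_insert_iff, Set.mem_singleton_iff]
  constructor
  · rintro ⟨-, rfl | rfl⟩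
    · exact .inl rfl
    · exact .inr (iterate_pred_apply_of_minimalPeriod_eq hf (by omega) y).symm
  · rintro (rfl | rfl)
    · exact ⟨(iterate_ne_self_of_minimalPeriod_eq hf one_pos (by omega) v).symm, .inl rfl⟩
    · exact ⟨(iterate_ne_self_of_minimalPeriod_eq hf (by omega) (by omega) v).symm,
        .inr (apply_iterate_pred_of_minimalPeriod_eq hf (by omega) v)⟩

theorem ncard_neighborSet_fromRel (hn : 3 ≤ n) (v : V) :
    ((fromRel (f · = ·)).neighborSet v).ncard = 2 := by
  rw [neighborSet_fromRel_eq_pair hf hn, Set.ncard_pair]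
  intro h
  apply iterate_ne_self_of_minimalPeriod_eq hf (k := 2) two_pos (by omega) v
  rw [iterate_succ_apply', iterate_one, h, apply_iterate_pred_of_minimalPeriod_eq hf (by omega)]

theorem supp_connectedComponentMk_fromRel (hn : 0 < n) (v : V) :
    ((fromRel (f · = ·)).connectedComponentMk v).supp = Set.range fun k : Fin n => f^[k] v := by
  have hstep : ∀ k, (fromRel (f · = ·)).Reachable (f^[k] v) (f^[k + 1] v) := fun k => by
    rcases eq_or_ne (f^[k] v) (f^[k + 1] v) with h | h
    · exact h ▸ .rfl
    · exact (fromRel_adj _ _ _).mpr ⟨h, .inl (iterate_succ_apply' f k v).symm⟩ |>.reachable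
  have hclosed : ∀ {u w}, (fromRel (f · = ·)).Walk u w →
      (∃ k, f^[k] v = u) → ∃ k, f^[k] v = w := by
    intro u w p
    induction p with
    | nil => exact id
    | cons hadj _ ih =>
      rintro ⟨k, rfl⟩
      refine ih ?_
      rcases ((fromRel_adj _ _ _).mp hadj).2 with h | h
      · exact ⟨k + 1, by rw [iterate_succ_apply', h]⟩
      · refine ⟨n - 1 + k, ?_⟩
        rw [iterate_add_apply, ← h, iterate_pred_apply_of_minimalPeriod_eq hf hn]
  ext y
  rw [ConnectedComponent.mem_supp_iff, ConnectedComponent.eq]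
  constructor
  · rintro ⟨p⟩
    obtain ⟨k, rfl⟩ := hclosed p.reverse ⟨0, rfl⟩
    exact ⟨⟨k % n, Nat.mod_lt k hn⟩, hf v ▸ iterate_mod_minimalPeriod_eq⟩
  · rintro ⟨k, rfl⟩
    clear hclosed
    dsimp only
    induction (k : ℕ) with
    | zero => exact .rfl
    | succ k ih => exact (hstep k).symm.trans ih

theorem isCycleFactor_fromRel {G : SimpleGraph V} (hG : ∀ v, G.Adj v (f v)) (hn : 3 ≤ n) :
    IsCycleFactor G (fromRel (f · = ·)) n := by
  refine ⟨⟨fun x y hxy => ?_, ncard_neighborSet_fromRel hf hn⟩, fun v => ?_⟩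
  · rcases ((fromRel_adj _ _ _).mp hxy).2 with rfl | rfl
    exacts [hG x, (hG y).symm]
  · rw [supp_connectedComponentMk_fromRel hf (by omega), Set.ncard_range_of_injective,
      Nat.card_eq_fintype_card, Fintype.card_fin]
    intro k l hkl
    exact Fin.ext <| iterate_injOn_Iio_minimalPeriod (hf v ▸ k.2) (hf v ▸ l.2) hkl

end CycleFactor

theorem IsTwoFactor.exists_adj {V : Type*} {G H : SimpleGraph V} (hH : IsTwoFactor G H) (v : V) :
    ∃ w, H.Adj v w :=
  Set.nonempty_of_ncard_ne_zero (s := H.neighborSet v) (by rw [hH.2 v]; decide)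

theorem IsHWPSolution.injective {V : Type*} [Nonempty V] {G : SimpleGraph V} {r s : ℕ}
    {F : Fin (r + s) → SimpleGraph V} (hF : IsHWPSolution G r s F) : Injective F := by
  intro i j hij
  have hfactor : IsTwoFactor G (F i) := by
    rcases lt_or_ge (i : ℕ) r with h | h
    exacts [(hF.1 i h).1, (hF.2.1 i h).1]
  obtain ⟨w, hw⟩ := hfactor.exists_adj (Classical.arbitrary V)
  obtain ⟨k, -, hk⟩ := hF.2.2 s(_, w) (hfactor.1 hw)
  have hw' : (F j).Adj _ w := hij ▸ hw
  exact (hk i hw).trans (hk j hw').symm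

theorem SimpleGraph.exists_perm_map_eq {ι V : Type*} [Finite ι] {F : ι → SimpleGraph V}
    (hF : Injective F) (e : V ↪ V) (h : ∀ i, ∃ j, (F i).map e = F j) :
    ∃ σ : Equiv.Perm ι, ∀ i, (F i).map e = F (σ i) := by
  choose τ hτ using h
  have hτ_inj : Injective τ := fun i j hij => hF <| map_injective e <| by rw [hτ, hτ, hij]
  exact ⟨Equiv.ofBijective τ hτ_inj.bijective_of_finite, hτ⟩

namespace HWP24

open QuaternionGroup

local notation "Q₂₄" => QuaternionGroup 6

def stabilizer : Finset Q₂₄ := {1, a 6, xa 0, xa 6}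

/-- `K y = K aʲ` for `j = rightCosetIdx y`. -/
def rightCosetIdx : Q₂₄ → Fin 6
  | a i => Fin.ofNat 6 i.val
  | xa i => Fin.ofNat 6 i.val

/-- `y K = aʲ K` for `j = leftCosetIdx y`. -/
def leftCosetIdx : Q₂₄ → Fin 6
  | a i => Fin.ofNat 6 i.val
  | xa i => -Fin.ofNat 6 i.val

/-- Each right coset `K aʲ` contains exactly one vertex of each `K`-translate of the triangles
`(1, a², a⁵)` and `(a³, a⁴, x a)`; right multiplication by `baseShift j` moves it to the next
vertex of its triangle. -/
def baseShift : Fin 6 → Q₂₄ := ![a 2, xa 10, a 3, a 1, xa 5, a 7]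

def baseStep (x : Q₂₄) : Q₂₄ := x * baseShift (rightCosetIdx x)

def orbitStep (c : Fin 6) (x : Q₂₄) : Q₂₄ := a c * baseStep ((a c)⁻¹ * x)

def step : Fin (7 + 4) → Q₂₄ → Q₂₄ :=
  Fin.append (Fin.cons (· * a 4) orbitStep) fun j => (· * xa j)

def factor (i : Fin (7 + 4)) : SimpleGraph Q₂₄ := fromRel (step i · = ·)

theorem rightCosetIdx_mul_left :
    ∀ k ∈ stabilizer, ∀ x, rightCosetIdx (k * x) = rightCosetIdx x := by
  decide

theorem inv_mul_mem_stabilizer : ∀ y : Q₂₄, (a (leftCosetIdx y))⁻¹ * y ∈ stabilizer := by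
  decide

theorem baseStep_mul_left {k : Q₂₄} (hk : k ∈ stabilizer) (x : Q₂₄) :
    baseStep (k * x) = k * baseStep x := by
  rw [baseStep, baseStep, rightCosetIdx_mul_left k hk, mul_assoc]

theorem orbitStep_mul_left (g : Q₂₄) (c : Fin 6) (x : Q₂₄) :
    orbitStep (leftCosetIdx (g * a c)) (g * x) = g * orbitStep c x := by
  have hk := inv_mul_mem_stabilizer (g * a c)
  generalize leftCosetIdx (g * a c) = c' at hk ⊢
  calc orbitStep c' (g * x)
      = a c' * baseStep (((a c')⁻¹ * (g * a c)) * ((a c)⁻¹ * x)) := by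
        simp only [orbitStep, mul_assoc, mul_inv_cancel_left]
    _ = g * orbitStep c x := by
        rw [baseStep_mul_left hk, orbitStep]
        simp only [mul_assoc, mul_inv_cancel_left]

theorem minimalPeriod_baseStep (x : Q₂₄) : minimalPeriod baseStep x = 3 :=
  haveI : Fact (Nat.Prime 3) := ⟨Nat.prime_three⟩
  minimalPeriod_eq_prime (by revert x; decide) (by revert x; decide)

theorem minimalPeriod_orbitStep (c : Fin 6) (x : Q₂₄) : minimalPeriod (orbitStep c) x = 3 := by
  have h : Semiconj (a c * ·) baseStep (orbitStep c) := fun y => by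
    simp only [orbitStep, inv_mul_cancel_left]
  have := h.minimalPeriod_apply (mul_right_injective _) ((a c)⁻¹ * x)
  rwa [mul_inv_cancel_left, minimalPeriod_baseStep] at this

theorem minimalPeriod_step (i : Fin (7 + 4)) (x : Q₂₄) :
    minimalPeriod (step i) x = if (i : ℕ) < 7 then 3 else 4 := by
  induction i using Fin.addCases with
  | left i =>
    rw [step, Fin.append_left, if_pos (by simp)]
    induction i using Fin.cases with
    | zero => rw [Fin.cons_zero, minimalPeriod_mul_right, orderOf_a]; rfl
    | succ c => rw [Fin.cons_succ, minimalPeriod_orbitStep]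
  | right j =>
    rw [step, Fin.append_right, if_neg (by simp), minimalPeriod_mul_right, orderOf_xa]

theorem cocktailCayley_adj_step : ∀ i x, (cocktailCayley Q₂₄ (a 6)).Adj x (step i x) := by
  show ∀ i x, x ≠ step i x ∧ x⁻¹ * step i x ≠ a 6 ∧ (step i x)⁻¹ * x ≠ a 6
  decide

theorem existsUnique_step_of_adj : ∀ x y : Q₂₄, (cocktailCayley Q₂₄ (a 6)).Adj x y →
    ∃! i, step i x = y ∨ step i y = x := by
  show ∀ x y : Q₂₄, x ≠ y ∧ x⁻¹ * y ≠ a 6 ∧ y⁻¹ * x ≠ a 6 →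
    ∃ i, (step i x = y ∨ step i y = x) ∧ ∀ j, (step j x = y ∨ step j y = x) → j = i
  decide

theorem isHWPSolution_factor : IsHWPSolution (cocktailCayley Q₂₄ (a 6)) 7 4 factor := by
  refine ⟨fun i hi => ?_, fun i hi => ?_, fun e he => ?_⟩
  · exact isCycleFactor_fromRel (fun x => (minimalPeriod_step i x).trans (if_pos hi))
      (cocktailCayley_adj_step i) le_rfl
  · exact isCycleFactor_fromRel (fun x => (minimalPeriod_step i x).trans (if_neg (by omega)))
      (cocktailCayley_adj_step i) (by norm_num)
  · induction e using Sym2.ind with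
    | _ x y =>
      rw [mem_edgeSet] at he
      simpa only [factor, mem_edgeSet, fromRel_adj, he.ne, ne_eq, not_false_eq_true, true_and]
        using existsUnique_step_of_adj x y he

theorem exists_map_mulLeft_factor_eq (g : Q₂₄) (i : Fin (7 + 4)) :
    ∃ j, (factor i).map (Equiv.mulLeft g).toEmbedding = factor j := by
  induction i using Fin.addCases with
  | left i =>
    induction i using Fin.cases with
    | zero =>
      refine ⟨Fin.castAdd 4 0, map_fromRel_of_semiconj _ fun x => ?_⟩
      simp only [step, Fin.append_left, Fin.cons_zero, Equiv.coe_mulLeft, mul_assoc]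
    | succ c =>
      refine ⟨Fin.castAdd 4 (leftCosetIdx (g * a c)).succ,
        map_fromRel_of_semiconj _ fun x => ?_⟩
      simp only [step, Fin.append_left, Fin.cons_succ, Equiv.coe_mulLeft]
      exact (orbitStep_mul_left g c x).symm
  | right j =>
    refine ⟨Fin.natAdd 7 j, map_fromRel_of_semiconj _ fun x => ?_⟩
    simp only [step, Fin.append_right, Equiv.coe_mulLeft, mul_assoc]

end HWP24

open HWP24 in
/-- HWP(24; 3, 4; 7, 4) has a sharply-vertex-transitive solution: there is a 2-factorization
of the cocktail party graph `K_24 - I = Cay[Q_24 : Q_24 ∖ {1, a^6}]` on the dicyclic group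
`Q_24` of order 24 (here `QuaternionGroup 6`, whose unique involution is `a^6`) with exactly
7 triangle-factors and 4 quadrangle-factors, such that left multiplication by every element
of `Q_24` permutes the 2-factors. -/
theorem hwp24_dicyclic_regular_7_4 :
    ∃ F : Fin (7 + 4) → SimpleGraph (QuaternionGroup 6),
      IsHWPSolution (cocktailCayley (QuaternionGroup 6) (QuaternionGroup.a 6)) 7 4 F ∧
      ∀ g : QuaternionGroup 6, ∃ σ : Equiv.Perm (Fin (7 + 4)),
        ∀ i : Fin (7 + 4),
          (F i).map (Equiv.mulLeft g).toEmbedding = F (σ i) :=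
  ⟨factor, isHWPSolution_factor, fun g =>
    exists_perm_map_eq isHWPSolution_factor.injective _ (exists_map_mulLeft_factor_eq g)⟩
end

section
/- There exists a 2-factorization of the cocktail party graph K_24 − I having exactly 9 triangle-factors and 2 quadrangle-factors, which moreover is Q_24-regular: identifying the vertex set with the dicyclic group Q_24 of order 24 (so that K_24 − I = Cay[Q_24 : Q_24∖{1, a^6}], where a^6 is the unique involution of Q_24), left multiplication by every element of Q_24 is an automorphism of the graph permuting the 2-factors of the factorization. In other words, HWP(24; 3, 4; 9, 2) has a sharply-vertex-transitive solution. -/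
/-! Label the eleven factors by the `Q_24`-set `(ℤ/3 ⊔ ℤ/6) ⊔ (ℤ/1 ⊔ ℤ/1)`, on which `Q_24` acts
through its dihedral quotient (`a` translates, `x` reflects). A base coloring `c` of the
connection set names the factor containing the edge `{1, s}`, and the edge `{x, y}` receives the
color `x • c (x⁻¹ y)`. Provided `c s = s • c s⁻¹`, this is a well-defined edge coloring which is
equivariant by construction, so its color classes form a 2-factorization permuted by left
multiplication. Every factor is then a translate of one of the four base factors `0, 3, 9, 10`,
and these are checked to be triangle- resp. quadrangle-factors by computation. -/

namespace SimpleGraph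

variable {V κ : Type*}

def edgeColorClass (Γ : SimpleGraph V) (col : V → V → κ) (i : κ) : SimpleGraph V where
  Adj x y := Γ.Adj x y ∧ col x y = i ∧ col y x = i
  symm := ⟨fun _ _ h => ⟨h.1.symm, h.2.2, h.2.1⟩⟩
  loopless := ⟨fun _ h => h.1.ne rfl⟩

instance (Γ : SimpleGraph V) [DecidableRel Γ.Adj] [DecidableEq κ] (col : V → V → κ) (i : κ) :
    DecidableRel (Γ.edgeColorClass col i).Adj := fun x y =>
  inferInstanceAs (Decidable (Γ.Adj x y ∧ col x y = i ∧ col y x = i))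

lemma edgeColorClass_le (Γ : SimpleGraph V) (col : V → V → κ) (i : κ) :
    Γ.edgeColorClass col i ≤ Γ :=
  fun _ _ h => h.1

lemma existsUnique_mem_edgeSet_edgeColorClass {Γ : SimpleGraph V} {col : V → V → κ}
    (hcol : ∀ x y, Γ.Adj x y → col x y = col y x) {e : Sym2 V} (he : e ∈ Γ.edgeSet) :
    ∃! i, e ∈ (Γ.edgeColorClass col i).edgeSet := by
  induction e using Sym2.ind with
  | h x y => exact ⟨col x y, ⟨he, rfl, (hcol x y he).symm⟩, fun i hi => hi.2.1.symm⟩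

section BallFinset

variable [Fintype V] [DecidableEq V] (H : SimpleGraph V) [DecidableRel H.Adj]

def ballFinset (v : V) : ℕ → Finset V
  | 0 => {v}
  | k + 1 => ballFinset v k ∪ (ballFinset v k).biUnion fun u => H.neighborFinset u

lemma mem_ballFinset_self (v : V) : ∀ k, v ∈ H.ballFinset v k
  | 0 => Finset.mem_singleton_self v
  | k + 1 => Finset.mem_union_left _ (mem_ballFinset_self v k)

lemma ballFinset_subset_succ (v : V) (k : ℕ) : H.ballFinset v k ⊆ H.ballFinset v (k + 1) :=
  Finset.subset_union_left

lemma reachable_of_mem_ballFinset {v : V} :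
    ∀ {k : ℕ} {w : V}, w ∈ H.ballFinset v k → H.Reachable v w
  | 0, w, hw => by
    rw [ballFinset, Finset.mem_singleton] at hw
    exact hw ▸ Reachable.refl w
  | k + 1, w, hw => by
    rw [ballFinset, Finset.mem_union, Finset.mem_biUnion] at hw
    rcases hw with hw | ⟨u, hu, huw⟩
    · exact reachable_of_mem_ballFinset hw
    · exact (reachable_of_mem_ballFinset hu).trans ((H.mem_neighborFinset u w).1 huw).reachable

lemma supp_connectedComponentMk_eq_ballFinset {v : V} {k : ℕ}
    (hk : H.ballFinset v (k + 1) = H.ballFinset v k) :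
    (H.connectedComponentMk v).supp = ↑(H.ballFinset v k) := by
  have hclosed : ∀ u w, H.Adj u w → u ∈ H.ballFinset v k → w ∈ H.ballFinset v k := by
    intro u w huw hu
    rw [← hk, ballFinset]
    exact Finset.mem_union_right _
      (Finset.mem_biUnion.2 ⟨u, hu, (H.mem_neighborFinset u w).2 huw⟩)
  ext w
  rw [ConnectedComponent.mem_supp_iff, ConnectedComponent.eq, Finset.mem_coe]
  refine ⟨fun ⟨p⟩ => ?_, fun hw => (H.reachable_of_mem_ballFinset hw).symm⟩
  suffices h : ∀ {u w : V}, H.Walk u w → u ∈ H.ballFinset v k → w ∈ H.ballFinset v k from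
    h p.reverse (H.mem_ballFinset_self v k)
  intro u w q
  induction q with
  | nil => exact id
  | cons huw _ ih => exact fun hu => ih (hclosed _ _ huw hu)

end BallFinset

end SimpleGraph

open SimpleGraph

theorem isCycleFactor_of_ballFinset {V : Type*} [Fintype V] [DecidableEq V]
    {G H : SimpleGraph V} [DecidableRel H.Adj] {k n : ℕ} (hle : H ≤ G)
    (hdeg : ∀ v, H.degree v = 2)
    (hball : ∀ v, (H.ballFinset v k).card = n ∧ (H.ballFinset v (k + 1)).card = n) :
    IsCycleFactor G H n := by
  refine ⟨⟨hle, fun v => ?_⟩, fun v => ?_⟩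
  · rw [Set.ncard_eq_toFinset_card', ← neighborFinset_def, card_neighborFinset_eq_degree, hdeg]
  · have hk : H.ballFinset v (k + 1) = H.ballFinset v k :=
      (Finset.eq_of_subset_of_card_le (H.ballFinset_subset_succ v k)
        ((hball v).2.trans (hball v).1.symm).le).symm
    rw [H.supp_connectedComponentMk_eq_ballFinset hk, Set.ncard_coe_finset, (hball v).1]

theorem IsCycleFactor.map_equiv {V : Type*} {G H : SimpleGraph V} {n : ℕ}
    (hH : IsCycleFactor G H n) (e : V ≃ V) (he : ∀ x y, G.Adj (e x) (e y) ↔ G.Adj x y) :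
    IsCycleFactor G (H.map e.toEmbedding) n := by
  obtain ⟨⟨hle, hdeg⟩, hcomp⟩ := hH
  refine ⟨⟨?_, fun v => ?_⟩, fun v => ?_⟩
  · rintro _ _ ⟨-, x, y, hxy, rfl, rfl⟩
    exact (he x y).2 (hle hxy)
  · have h := Nat.card_congr ((Iso.map e H).mapNeighborSet (e.symm v))
    rw [← e.apply_symm_apply v]
    exact h.symm.trans (hdeg (e.symm v))
  · have h := Nat.card_congr
      (ConnectedComponent.isoEquivSupp (Iso.map e H) (H.connectedComponentMk (e.symm v)))
    rw [← e.apply_symm_apply v]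
    exact h.symm.trans (hcomp (e.symm v))

section CayleyColoring

variable {G κ : Type*} [Group G]

instance [DecidableEq G] (ι : G) : DecidableRel (cocktailCayley G ι).Adj := fun x y =>
  inferInstanceAs (Decidable (x ≠ y ∧ x⁻¹ * y ≠ ι ∧ y⁻¹ * x ≠ ι))

lemma cocktailCayley_adj_mul_left (ι g x y : G) :
    (cocktailCayley G ι).Adj (g * x) (g * y) ↔ (cocktailCayley G ι).Adj x y := by
  simp only [cocktailCayley, mul_inv_rev, mul_assoc, inv_mul_cancel_left, ne_eq, mul_right_inj]

variable [MulAction G κ]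

def cayleyColoring (c : G → κ) (x y : G) : κ := x • c (x⁻¹ * y)

lemma cayleyColoring_mul_left (c : G → κ) (g x y : G) :
    cayleyColoring c (g * x) (g * y) = g • cayleyColoring c x y := by
  simp only [cayleyColoring, mul_inv_rev, mul_assoc, inv_mul_cancel_left, mul_smul]

lemma cayleyColoring_comm {Γ : SimpleGraph G}
    (hΓ : ∀ g x y, Γ.Adj (g * x) (g * y) ↔ Γ.Adj x y) {c : G → κ}
    (hc : ∀ s, Γ.Adj 1 s → c s = s • c s⁻¹) {x y : G} (h : Γ.Adj x y) :
    cayleyColoring c x y = cayleyColoring c y x := by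
  have hs : Γ.Adj 1 (x⁻¹ * y) := by rw [← hΓ x, mul_one, mul_inv_cancel_left]; exact h
  rw [cayleyColoring, cayleyColoring, hc _ hs, ← mul_smul, mul_inv_cancel_left, mul_inv_rev,
    inv_inv]

lemma map_mulLeft_edgeColorClass {Γ : SimpleGraph G}
    (hΓ : ∀ g x y, Γ.Adj (g * x) (g * y) ↔ Γ.Adj x y) {col : G → G → κ}
    (hcol : ∀ g x y, col (g * x) (g * y) = g • col x y) (g : G) (i : κ) :
    (Γ.edgeColorClass col i).map (Equiv.mulLeft g).toEmbedding =
      Γ.edgeColorClass col (g • i) := by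
  have hsymm : Equiv.mulLeft g = (Equiv.mulLeft g⁻¹).symm := by ext; simp
  ext x y
  rw [hsymm, map_symm, comap_adj]
  simp only [edgeColorClass, Equiv.coe_toEmbedding, Equiv.coe_mulLeft, hΓ, hcol, inv_smul_eq_iff]

end CayleyColoring

namespace QuaternionGroup

variable {n m : ℕ} [hmn : Fact (m ∣ n)]

/-- `m ∣ n` is needed for `xa i * xa j = a (n + j - i)` to act as the translation by `j - i`. -/
instance mulActionZMod : MulAction (QuaternionGroup n) (ZMod m) where
  smul
    | a i, j => j + ZMod.castHom (hmn.out.mul_left 2) (ZMod m) i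
    | xa i, j => -j - ZMod.castHom (hmn.out.mul_left 2) (ZMod m) i
  one_smul j := by
    change j + _ = j
    rw [map_zero, add_zero]
  mul_smul g h j := by
    have hn : ZMod.castHom (hmn.out.mul_left 2) (ZMod m) n = 0 := by
      rw [map_natCast, ZMod.natCast_eq_zero_iff]
      exact hmn.out
    cases g <;> cases h <;>
      simp only [HSMul.hSMul, a_mul_a, a_mul_xa, xa_mul_a, xa_mul_xa, map_add, map_sub, hn] <;> ring

end QuaternionGroup

instance : Fact (3 ∣ 6) := ⟨by norm_num⟩
instance : Fact (6 ∣ 6) := ⟨dvd_rfl⟩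
instance : Fact (1 ∣ 6) := ⟨one_dvd 6⟩

namespace Q24

open QuaternionGroup

abbrev cocktail : SimpleGraph (QuaternionGroup 6) := cocktailCayley (QuaternionGroup 6) (a 6)

/-- Factors `0, 1, 2` form the orbit `ℤ/3`, factors `3, …, 8` the orbit `ℤ/6`, and factors `9`
and `10` are fixed by the whole group. -/
def factorLabelEquiv : Fin (9 + 2) ≃ (ZMod 3 ⊕ ZMod 6) ⊕ (ZMod 1 ⊕ ZMod 1) :=
  finSumFinEquiv.symm.trans (Equiv.sumCongr (finSumFinEquiv (m := 3) (n := 6)).symm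
    (finSumFinEquiv (m := 1) (n := 1)).symm)

instance : MulAction (QuaternionGroup 6) (Fin (9 + 2)) := factorLabelEquiv.mulAction _

/-- The factor containing the edge `{1, s}`; the values at the non-edges `1` and `a 6` are
irrelevant. -/
def baseColoring : QuaternionGroup 6 → Fin (9 + 2)
  | a i => ![0, 8, 4, 4, 0, 5, 0, 6, 2, 7, 8, 7] i
  | xa i => ![1, 9, 0, 6, 3, 10, 2, 9, 1, 3, 5, 10] i

abbrev factor (i : Fin (9 + 2)) : SimpleGraph (QuaternionGroup 6) :=
  cocktail.edgeColorClass (cayleyColoring baseColoring) i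

lemma baseColoring_eq_smul_inv :
    ∀ s, cocktail.Adj 1 s → baseColoring s = s • baseColoring s⁻¹ := by
  decide +kernel

lemma exists_smul_eq_of_lt_nine : ∀ i : Fin (9 + 2), (i : ℕ) < 9 →
    ∃ g : QuaternionGroup 6, g • (0 : Fin (9 + 2)) = i ∨ g • (3 : Fin (9 + 2)) = i := by
  decide +kernel

lemma isCycleFactor_factor_zero : IsCycleFactor cocktail (factor 0) 3 :=
  isCycleFactor_of_ballFinset (edgeColorClass_le _ _ _) (by decide +kernel) (k := 1)
    (by decide +kernel)

lemma isCycleFactor_factor_three : IsCycleFactor cocktail (factor 3) 3 :=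
  isCycleFactor_of_ballFinset (edgeColorClass_le _ _ _) (by decide +kernel) (k := 1)
    (by decide +kernel)

lemma isCycleFactor_factor_nine : IsCycleFactor cocktail (factor 9) 4 :=
  isCycleFactor_of_ballFinset (edgeColorClass_le _ _ _) (by decide +kernel) (k := 2)
    (by decide +kernel)

lemma isCycleFactor_factor_ten : IsCycleFactor cocktail (factor 10) 4 :=
  isCycleFactor_of_ballFinset (edgeColorClass_le _ _ _) (by decide +kernel) (k := 2)
    (by decide +kernel)

end Q24

open Q24 in
/-- HWP(24; 3, 4; 9, 2) has a sharply-vertex-transitive solution: there is a 2-factorization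
of the cocktail party graph `K_24 - I = Cay[Q_24 : Q_24 ∖ {1, a^6}]` on the dicyclic group
`Q_24` of order 24 (here `QuaternionGroup 6`, whose unique involution is `a^6`) with exactly
9 triangle-factors and 2 quadrangle-factors, such that left multiplication by every element
of `Q_24` permutes the 2-factors. -/
theorem hwp24_dicyclic_regular_9_2 :
    ∃ F : Fin (9 + 2) → SimpleGraph (QuaternionGroup 6),
      IsHWPSolution (cocktailCayley (QuaternionGroup 6) (QuaternionGroup.a 6)) 9 2 F ∧
      ∀ g : QuaternionGroup 6, ∃ σ : Equiv.Perm (Fin (9 + 2)),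
        ∀ i : Fin (9 + 2),
          (F i).map (Equiv.mulLeft g).toEmbedding = F (σ i) := by
  have hΓ := cocktailCayley_adj_mul_left (QuaternionGroup.a 6 : QuaternionGroup 6)
  have hmap : ∀ g i, (factor i).map (Equiv.mulLeft g).toEmbedding = factor (g • i) :=
    map_mulLeft_edgeColorClass hΓ (cayleyColoring_mul_left baseColoring)
  have htranslate : ∀ {i n}, IsCycleFactor cocktail (factor i) n →
      ∀ g, IsCycleFactor cocktail (factor (g • i)) n :=
    fun h g => hmap g _ ▸ h.map_equiv _ (hΓ g)
  refine ⟨factor, ⟨fun i hi => ?_, fun i hi => ?_, fun e he => ?_⟩,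
    fun g => ⟨MulAction.toPerm g, hmap g⟩⟩
  · obtain ⟨g, rfl | rfl⟩ := exists_smul_eq_of_lt_nine i hi
    · exact htranslate isCycleFactor_factor_zero g
    · exact htranslate isCycleFactor_factor_three g
  · obtain rfl | rfl : i = 9 ∨ i = 10 := by revert i; decide
    · exact isCycleFactor_factor_nine
    · exact isCycleFactor_factor_ten
  · exact existsUnique_mem_edgeSet_edgeColorClass
      (fun _ _ => cayleyColoring_comm hΓ baseColoring_eq_smul_inv) he
end

section
/- There exists a 2-factorization of the graph K_48 − I (the complete graph on 48 vertices minus a perfect matching I) having exactly 7 triangle-factors and 16 quadrangle-factors; i.e., the Hamilton–Waterloo problem HWP(48; 3, 4; 7, 16) has a solution. -/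
/-!
Every factor, and the removed matching `I`, is the functional graph of an explicit permutation
of the 48 vertices all of whose cycles have the same length: 3 for the seven triangle-factors,
4 for the sixteen quadrangle-factors and 2 for `I`. The functional graph of a permutation all of
whose cycles have length `n ≥ 3` is a 2-factor whose components are its `n`-cycles, so what
remains is a finite check that these graphs are pairwise edge-disjoint and cover `K_48`.
-/

open Function

namespace SimpleGraph

variable {V : Type*}

def functionalGraph (σ : V → V) : SimpleGraph V := fromRel fun u w => σ u = w

lemma functionalGraph_adj {σ : V → V} {u w : V} :
    (functionalGraph σ).Adj u w ↔ u ≠ w ∧ (σ u = w ∨ σ w = u) :=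
  fromRel_adj _ u w

lemma reachable_functionalGraph_iterate (σ : V → V) (v : V) (k : ℕ) :
    (functionalGraph σ).Reachable v (σ^[k] v) := by
  induction k with
  | zero => rfl
  | succ k ih =>
    refine ih.trans ?_
    rw [iterate_succ_apply']
    by_cases h : σ^[k] v = σ (σ^[k] v)
    · rw [← h]
    · exact (functionalGraph_adj.mpr ⟨h, Or.inl rfl⟩).reachable

lemma disjoint_functionalGraph {σ τ : V → V} (h₁ : ∀ u, σ u ≠ τ u) (h₂ : ∀ u, τ (σ u) ≠ u) :
    Disjoint (functionalGraph σ) (functionalGraph τ) := by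
  rw [disjoint_iff]
  ext u w
  simp only [inf_adj, functionalGraph_adj, bot_adj, iff_false]
  rintro ⟨⟨-, rfl | rfl⟩, -, h | h⟩
  exacts [h₁ u h.symm, h₂ u h, h₂ w h, h₁ w h.symm]

section Periodic

variable {σ : V → V} {n : ℕ}

lemma apply_eq_iff_eq_iterate_pred (hσ : ∀ v, IsPeriodicPt σ n v) (hn : n ≠ 0) {v w : V} :
    σ w = v ↔ w = σ^[n - 1] v := by
  constructor
  · rintro rfl
    rw [← iterate_succ_apply, Nat.succ_eq_add_one, Nat.sub_one_add_one hn, (hσ w).eq]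
  · rintro rfl
    rw [← iterate_succ_apply' σ, Nat.succ_eq_add_one, Nat.sub_one_add_one hn, (hσ v).eq]

lemma neighborSet_functionalGraph (hσ : ∀ v, minimalPeriod σ v = n) (hn : 2 ≤ n) (v : V) :
    (functionalGraph σ).neighborSet v = {σ v, σ^[n - 1] v} := by
  have hper : ∀ v, IsPeriodicPt σ n v := fun v => hσ v ▸ isPeriodicPt_minimalPeriod σ v
  have hne₁ : v ≠ σ v := fun h =>
    not_isPeriodicPt_of_pos_of_lt_minimalPeriod one_ne_zero (hσ v ▸ hn) h.symm
  have hne₂ : v ≠ σ^[n - 1] v := fun h =>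
    not_isPeriodicPt_of_pos_of_lt_minimalPeriod (n := n - 1) (by omega)
      (by rw [hσ v]; omega) h.symm
  ext w
  rw [mem_neighborSet, functionalGraph_adj,
    apply_eq_iff_eq_iterate_pred hper (by omega) (v := v) (w := w)]
  constructor
  · rintro ⟨-, h | h⟩
    exacts [Or.inl h.symm, Or.inr h]
  · rintro (rfl | rfl)
    exacts [⟨hne₁, Or.inl rfl⟩, ⟨hne₂, Or.inr rfl⟩]

lemma ncard_neighborSet_functionalGraph (hσ : ∀ v, minimalPeriod σ v = n) (hn : 3 ≤ n) (v : V) :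
    ((functionalGraph σ).neighborSet v).ncard = 2 := by
  rw [neighborSet_functionalGraph hσ (by omega)]
  refine Set.ncard_pair fun h => ?_
  -- otherwise `σ (σ v) = σ^[n] v = v`, so `v` would have period `2 < n`
  have h2 : IsPeriodicPt σ 2 v := by
    rw [IsPeriodicPt, IsFixedPt, iterate_succ_apply', iterate_one, h, ← iterate_succ_apply' σ,
      Nat.succ_eq_add_one, Nat.sub_one_add_one (by omega), ← hσ v, iterate_minimalPeriod]
  exact not_isPeriodicPt_of_pos_of_lt_minimalPeriod two_ne_zero (hσ v ▸ hn) h2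

lemma ncard_neighborSet_functionalGraph_of_minimalPeriod_eq_two
    (hσ : ∀ v, minimalPeriod σ v = 2) (v : V) :
    ((functionalGraph σ).neighborSet v).ncard = 1 := by
  rw [neighborSet_functionalGraph hσ le_rfl, iterate_one, Set.pair_eq_singleton,
    Set.ncard_singleton]

lemma supp_connectedComponentMk_functionalGraph (hσ : ∀ v, IsPeriodicPt σ n v) (hn : n ≠ 0)
    (v : V) : ((functionalGraph σ).connectedComponentMk v).supp = Set.range (σ^[·] v) := by
  ext w
  rw [ConnectedComponent.mem_supp_iff, ConnectedComponent.eq]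
  refine ⟨fun h => ?_, fun ⟨k, hk⟩ => hk ▸ (reachable_functionalGraph_iterate σ v k).symm⟩
  obtain hvw := (reachable_iff_reflTransGen v w).mp h.symm
  clear h
  induction hvw with
  | refl => exact ⟨0, rfl⟩
  | tail _ hadj ih =>
    obtain ⟨k, rfl⟩ := ih
    dsimp only at hadj
    rcases (functionalGraph_adj.mp hadj).2 with h | h
    · exact ⟨k + 1, by dsimp only; rw [← h, iterate_succ_apply']⟩
    · exact ⟨n - 1 + k, by
        dsimp only; rw [iterate_add_apply, ← (apply_eq_iff_eq_iterate_pred hσ hn).mp h]⟩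

lemma ncard_supp_connectedComponentMk_functionalGraph (hσ : ∀ v, minimalPeriod σ v = n)
    (hn : n ≠ 0) (v : V) : ((functionalGraph σ).connectedComponentMk v).supp.ncard = n := by
  have hper : ∀ v, IsPeriodicPt σ n v := fun v => hσ v ▸ isPeriodicPt_minimalPeriod σ v
  have hrange : Set.range (σ^[·] v) = (σ^[·] v) '' Set.Iio n := by
    refine subset_antisymm ?_ (Set.image_subset_range _ _)
    rintro _ ⟨k, rfl⟩
    refine ⟨k % n, Nat.mod_lt k (Nat.pos_of_ne_zero hn), ?_⟩
    simp only [← hσ v, iterate_mod_minimalPeriod_eq]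
  have hinj : Set.InjOn (σ^[·] v) (Set.Iio n) := hσ v ▸ iterate_injOn_Iio_minimalPeriod
  rw [supp_connectedComponentMk_functionalGraph hper hn, hrange, hinj.ncard_image,
    ← Finset.coe_range, Set.ncard_coe_finset, Finset.card_range]

theorem isCycleFactor_functionalGraph {G : SimpleGraph V} (hσ : ∀ v, minimalPeriod σ v = n)
    (hn : 3 ≤ n) (hG : functionalGraph σ ≤ G) : IsCycleFactor G (functionalGraph σ) n :=
  ⟨⟨hG, ncard_neighborSet_functionalGraph hσ hn⟩,
    ncard_supp_connectedComponentMk_functionalGraph hσ (by omega)⟩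

end Periodic

lemma existsUnique_mem_edgeSet_of_pairwise_disjoint {ι : Type*} {G : SimpleGraph V}
    {F : ι → SimpleGraph V} (hF : Pairwise (Disjoint on F))
    (hcover : ∀ e ∈ G.edgeSet, ∃ i, e ∈ (F i).edgeSet) :
    ∀ e ∈ G.edgeSet, ∃! i, e ∈ (F i).edgeSet := by
  intro e he
  obtain ⟨i, hi⟩ := hcover e he
  refine ⟨i, hi, fun j hj => by_contra fun hji => ?_⟩
  exact Set.disjoint_left.mp (disjoint_edgeSet.mpr (hF hji)) hj hi

end SimpleGraph

open SimpleGraph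

-- A permutation of `Fin 48` is listed by its values at `0, …, 47`.
def matchingTable : List ℕ := [6, 7, 8, 9, 10, 11, 0, 1, 2, 3, 4, 5, 18, 19, 20, 21, 22, 23, 12, 13, 14, 15, 16, 17, 30, 31, 32, 33, 34, 35, 24, 25, 26, 27, 28, 29, 42, 43, 44, 45, 46, 47, 36, 37, 38, 39, 40, 41]

def factorTables : List (List ℕ) := [
  [17, 19, 16, 18, 13, 15, 12, 14, 25, 27, 24, 26, 28, 29, 30, 31, 36, 37, 38, 39, 33, 35, 32, 34, 44, 45, 46, 47, 6, 4, 7, 5, 40, 41, 42, 43, 2, 0, 3, 1, 22, 20, 23, 21, 10, 8, 11, 9],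
  [19, 17, 18, 16, 15, 13, 14, 12, 27, 25, 26, 24, 29, 28, 31, 30, 37, 36, 39, 38, 35, 33, 34, 32, 45, 44, 47, 46, 5, 7, 4, 6, 41, 40, 43, 42, 1, 3, 0, 2, 21, 23, 20, 22, 9, 11, 8, 10],
  [18, 16, 19, 17, 14, 12, 15, 13, 26, 24, 27, 25, 30, 31, 28, 29, 38, 39, 36, 37, 34, 32, 35, 33, 46, 47, 44, 45, 4, 6, 5, 7, 42, 43, 40, 41, 0, 2, 1, 3, 20, 22, 21, 23, 8, 10, 9, 11],
  [16, 18, 17, 19, 12, 14, 13, 15, 24, 26, 25, 27, 31, 30, 29, 28, 39, 38, 37, 36, 32, 34, 33, 35, 47, 46, 45, 44, 7, 5, 6, 4, 43, 42, 41, 40, 3, 1, 2, 0, 23, 21, 22, 20, 11, 9, 10, 8],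
  [2, 5, 4, 7, 0, 10, 8, 11, 9, 6, 1, 3, 14, 17, 16, 19, 12, 22, 20, 23, 21, 18, 13, 15, 26, 29, 28, 31, 24, 34, 32, 35, 33, 30, 25, 27, 38, 41, 40, 43, 36, 46, 44, 47, 45, 42, 37, 39],
  [10, 4, 6, 5, 9, 8, 7, 2, 3, 1, 11, 0, 22, 16, 18, 17, 21, 20, 19, 14, 15, 13, 23, 12, 34, 28, 30, 29, 33, 32, 31, 26, 27, 25, 35, 24, 46, 40, 42, 41, 45, 44, 43, 38, 39, 37, 47, 36],
  [5, 8, 9, 4, 6, 7, 3, 0, 11, 10, 2, 1, 17, 20, 21, 16, 18, 19, 15, 12, 23, 22, 14, 13, 29, 32, 33, 28, 30, 31, 27, 24, 35, 34, 26, 25, 41, 44, 45, 40, 42, 43, 39, 36, 47, 46, 38, 37],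
  [32, 33, 46, 47, 20, 21, 38, 39, 16, 17, 30, 31, 24, 25, 42, 43, 9, 8, 28, 29, 5, 4, 36, 37, 13, 12, 40, 41, 19, 18, 11, 10, 1, 0, 44, 45, 23, 22, 7, 6, 27, 26, 15, 14, 35, 34, 3, 2],
  [35, 44, 33, 45, 23, 36, 21, 37, 19, 28, 17, 29, 27, 40, 25, 41, 30, 11, 31, 9, 38, 7, 39, 5, 42, 15, 43, 13, 8, 10, 18, 16, 46, 3, 47, 1, 4, 6, 22, 20, 12, 14, 26, 24, 0, 2, 34, 32],
  [46, 47, 34, 35, 38, 39, 22, 23, 30, 31, 18, 19, 42, 43, 26, 27, 28, 29, 11, 10, 36, 37, 7, 6, 40, 41, 15, 14, 17, 16, 9, 8, 44, 45, 3, 2, 21, 20, 5, 4, 25, 24, 13, 12, 33, 32, 1, 0],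
  [34, 45, 32, 44, 22, 37, 20, 36, 18, 29, 16, 28, 26, 41, 24, 40, 11, 30, 9, 31, 7, 38, 5, 39, 15, 42, 13, 43, 10, 8, 19, 17, 3, 46, 1, 47, 6, 4, 23, 21, 14, 12, 27, 25, 2, 0, 35, 33],
  [12, 13, 14, 15, 44, 45, 46, 47, 36, 37, 38, 39, 1, 0, 3, 2, 32, 33, 34, 35, 24, 25, 26, 27, 21, 20, 23, 22, 40, 41, 42, 43, 17, 16, 19, 18, 9, 8, 11, 10, 29, 28, 31, 30, 5, 4, 7, 6],
  [14, 15, 12, 13, 46, 47, 44, 45, 38, 39, 36, 37, 3, 2, 1, 0, 34, 35, 32, 33, 26, 27, 24, 25, 23, 22, 21, 20, 42, 43, 40, 41, 19, 18, 17, 16, 11, 10, 9, 8, 31, 30, 29, 28, 7, 6, 5, 4],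
  [20, 21, 22, 23, 40, 41, 42, 43, 12, 13, 14, 15, 9, 8, 11, 10, 24, 25, 26, 27, 1, 0, 3, 2, 17, 16, 19, 18, 45, 44, 47, 46, 37, 36, 39, 38, 32, 33, 34, 35, 5, 4, 7, 6, 28, 29, 30, 31],
  [22, 23, 20, 21, 42, 43, 40, 41, 14, 15, 12, 13, 11, 10, 9, 8, 26, 27, 24, 25, 3, 2, 1, 0, 19, 18, 17, 16, 47, 46, 45, 44, 39, 38, 37, 36, 34, 35, 32, 33, 7, 6, 5, 4, 30, 31, 28, 29],
  [29, 28, 31, 30, 33, 32, 35, 34, 21, 20, 23, 22, 44, 45, 46, 47, 41, 40, 43, 42, 8, 9, 10, 11, 36, 37, 38, 39, 0, 1, 2, 3, 4, 5, 6, 7, 25, 24, 27, 26, 16, 17, 18, 19, 13, 12, 15, 14],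
  [31, 30, 29, 28, 35, 34, 33, 32, 23, 22, 21, 20, 46, 47, 44, 45, 43, 42, 41, 40, 10, 11, 8, 9, 38, 39, 36, 37, 2, 3, 0, 1, 6, 7, 4, 5, 27, 26, 25, 24, 18, 19, 16, 17, 15, 14, 13, 12],
  [24, 25, 26, 27, 16, 17, 18, 19, 40, 41, 42, 43, 32, 33, 34, 35, 5, 4, 7, 6, 45, 44, 47, 46, 1, 0, 3, 2, 36, 37, 38, 39, 13, 12, 15, 14, 29, 28, 31, 30, 9, 8, 11, 10, 20, 21, 22, 23],
  [26, 27, 24, 25, 18, 19, 16, 17, 42, 43, 40, 41, 34, 35, 32, 33, 7, 6, 5, 4, 47, 46, 45, 44, 3, 2, 1, 0, 38, 39, 36, 37, 15, 14, 13, 12, 31, 30, 29, 28, 11, 10, 9, 8, 22, 23, 20, 21],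
  [41, 40, 43, 42, 25, 24, 27, 26, 33, 32, 35, 34, 37, 36, 39, 38, 44, 45, 46, 47, 28, 29, 30, 31, 4, 5, 6, 7, 21, 20, 23, 22, 8, 9, 10, 11, 12, 13, 14, 15, 0, 1, 2, 3, 17, 16, 19, 18],
  [43, 42, 41, 40, 27, 26, 25, 24, 35, 34, 33, 32, 39, 38, 37, 36, 46, 47, 44, 45, 30, 31, 28, 29, 6, 7, 4, 5, 23, 22, 21, 20, 10, 11, 8, 9, 14, 15, 12, 13, 2, 3, 0, 1, 19, 18, 17, 16],
  [8, 3, 5, 10, 11, 4, 1, 9, 7, 0, 6, 2, 20, 15, 17, 22, 23, 16, 13, 21, 19, 12, 18, 14, 32, 27, 29, 34, 35, 28, 25, 33, 31, 24, 30, 26, 44, 39, 41, 46, 47, 40, 37, 45, 43, 36, 42, 38],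
  [1, 2, 3, 0, 7, 6, 11, 10, 4, 5, 8, 9, 13, 14, 15, 12, 19, 18, 23, 22, 16, 17, 20, 21, 25, 26, 27, 24, 31, 30, 35, 34, 28, 29, 32, 33, 37, 38, 39, 36, 43, 42, 47, 46, 40, 41, 44, 45]]

def ofTable (l : List ℕ) (v : Fin 48) : Fin 48 := Fin.ofNat 48 (l.getD v 0)

def matchingPerm : Fin 48 → Fin 48 := ofTable matchingTable

def factorPerm (i : Fin 23) : Fin 48 → Fin 48 := ofTable (factorTables.getD i [])

lemma minimalPeriod_matchingPerm (v : Fin 48) : minimalPeriod matchingPerm v = 2 := by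
  have h : ∀ v, IsPeriodicPt matchingPerm 2 v ∧ ¬IsFixedPt matchingPerm v := by decide +kernel
  exact minimalPeriod_eq_prime (h v).1 (h v).2

lemma minimalPeriod_factorPerm_of_lt {i : Fin 23} (hi : (i : ℕ) < 7) (v : Fin 48) :
    minimalPeriod (factorPerm i) v = 3 := by
  have h : ∀ i : Fin 23, (i : ℕ) < 7 → ∀ v,
      IsPeriodicPt (factorPerm i) 3 v ∧ ¬IsFixedPt (factorPerm i) v := by
    decide +kernel
  exact minimalPeriod_eq_prime (h i hi v).1 (h i hi v).2

lemma minimalPeriod_factorPerm_of_le {i : Fin 23} (hi : 7 ≤ (i : ℕ)) (v : Fin 48) :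
    minimalPeriod (factorPerm i) v = 4 := by
  have h : ∀ i : Fin 23, 7 ≤ (i : ℕ) → ∀ v,
      ¬IsPeriodicPt (factorPerm i) (2 ^ 1) v ∧ IsPeriodicPt (factorPerm i) (2 ^ 2) v := by
    decide +kernel
  exact minimalPeriod_eq_prime_pow (h i hi v).1 (h i hi v).2

lemma functionalGraph_factorPerm_le_sdiff (i : Fin 23) :
    functionalGraph (factorPerm i) ≤ ⊤ \ functionalGraph matchingPerm := by
  have h : ∀ i u, factorPerm i u ≠ matchingPerm u ∧ matchingPerm (factorPerm i u) ≠ u := by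
    decide +kernel
  exact le_sdiff.mpr ⟨le_top, disjoint_functionalGraph (fun u => (h i u).1) (fun u => (h i u).2)⟩

lemma pairwise_disjoint_functionalGraph_factorPerm :
    Pairwise (Disjoint on fun i => functionalGraph (factorPerm i)) := by
  have h : ∀ i j : Fin 23, i ≠ j → ∀ u,
      factorPerm i u ≠ factorPerm j u ∧ factorPerm j (factorPerm i u) ≠ u := by
    decide +kernel
  exact fun i j hij =>
    disjoint_functionalGraph (fun u => (h i j hij u).1) (fun u => (h i j hij u).2)

lemma exists_mem_edgeSet_functionalGraph_factorPerm :
    ∀ e ∈ (⊤ \ functionalGraph matchingPerm).edgeSet,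
      ∃ i, e ∈ (functionalGraph (factorPerm i)).edgeSet := by
  have h : ∀ u w : Fin 48, u ≠ w → matchingPerm u ≠ w →
      ∃ i, factorPerm i u = w ∨ factorPerm i w = u := by
    decide +kernel
  intro e he
  induction e using Sym2.ind with
  | _ u w =>
    simp only [mem_edgeSet, sdiff_adj, top_adj, functionalGraph_adj, not_and, not_or] at he ⊢
    obtain ⟨i, hi⟩ := h u w he.1 (he.2 he.1).1
    exact ⟨i, he.1, hi⟩

/-- HWP(48; 3, 4; 7, 16) has a solution: the complete graph `K_48` minus a perfect matching
`I` admits a 2-factorization with exactly 7 triangle-factors and 16 quadrangle-factors. -/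
theorem hwp48_7_16 :
    ∃ M : SimpleGraph (Fin 48), (∀ v : Fin 48, (M.neighborSet v).ncard = 1) ∧
      ∃ F : Fin (7 + 16) → SimpleGraph (Fin 48),
        IsHWPSolution ((⊤ : SimpleGraph (Fin 48)) \ M) 7 16 F := by
  refine ⟨functionalGraph matchingPerm,
    ncard_neighborSet_functionalGraph_of_minimalPeriod_eq_two minimalPeriod_matchingPerm,
    fun i => functionalGraph (factorPerm i), fun i hi => ?_, fun i hi => ?_,
    existsUnique_mem_edgeSet_of_pairwise_disjoint pairwise_disjoint_functionalGraph_factorPerm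
      exists_mem_edgeSet_functionalGraph_factorPerm⟩
  · exact isCycleFactor_functionalGraph (minimalPeriod_factorPerm_of_lt hi) le_rfl
      (functionalGraph_factorPerm_le_sdiff i)
  · exact isCycleFactor_functionalGraph (minimalPeriod_factorPerm_of_le hi) (by norm_num)
      (functionalGraph_factorPerm_le_sdiff i)
end
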